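/- In a 2×2 strict coordination game with α, β > 0 defined as the payoff-difference ratios, the distribution assigning probabilities 1/(1+β+αβ), 0, β/(1+β+αβ), αβ/(1+β+αβ) to joint actions (a_1^1,a_2^1), (a_1^1,a_2^2), (a_1^2,a_2^1), (a_1^2,a_2^2) respectively is a correlated equilibrium. -/
import Mathlib


/-- A distribution `σ` over the joint actions of a 2×2 game (indices: action `0 = a^1`,
action `1 = a^2`) is a correlated equilibrium for utilities `u1, u2`. -/
def IsCorrelatedEq (u1 u2 : Fin 2 → Fin 2 → ℝ) (σ : Fin 2 → Fin 2 → ℝ) : Prop :=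
  (∀ a1 a2, 0 ≤ σ a1 a2) ∧ (∑ a1 : Fin 2, ∑ a2 : Fin 2, σ a1 a2 = 1) ∧
  (∀ a1 a1' : Fin 2, 0 ≤ ∑ a2 : Fin 2, σ a1 a2 * (u1 a1 a2 - u1 a1' a2)) ∧
  (∀ a2 a2' : Fin 2, 0 ≤ ∑ a1 : Fin 2, σ a1 a2 * (u2 a1 a2 - u2 a1 a2'))

/-- In a 2×2 strict coordination game, the vertex distribution
`(1, 0, β, αβ)/(1+β+αβ)` on joint actions `(a_1^1,a_2^1), (a_1^1,a_2^2),
(a_1^2,a_2^1), (a_1^2,a_2^2)` is a correlated equilibrium. -/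
theorem vertex4_CE_of_strict_coordination
    (u1 u2 : Fin 2 → Fin 2 → ℝ)
    (h1 : u1 0 0 > u1 1 0) (h2 : u1 1 1 > u1 0 1)
    (h3 : u2 0 0 > u2 0 1) (h4 : u2 1 1 > u2 1 0)
    (α β : ℝ)
    (hα : α = (u1 0 0 - u1 1 0) / (u1 1 1 - u1 0 1))
    (hβ : β = (u2 0 0 - u2 0 1) / (u2 1 1 - u2 1 0)) :
    IsCorrelatedEq u1 u2
      ![![1 / (1+β+α*β), 0],
        ![β / (1+β+α*β), α*β / (1+β+α*β)]] := by
  have hA : (0:ℝ) < u1 1 1 - u1 0 1 := by linarith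
  have hE : (0:ℝ) < u2 1 1 - u2 1 0 := by linarith
  have hαpos : 0 < α := by rw [hα]; exact div_pos (by linarith) hA
  have hβpos : 0 < β := by rw [hβ]; exact div_pos (by linarith) hE
  have hαA : α * (u1 1 1 - u1 0 1) = u1 0 0 - u1 1 0 := by
    rw [hα]; field_simp
  have hβE : β * (u2 1 1 - u2 1 0) = u2 0 0 - u2 0 1 := by
    rw [hβ]; field_simp
  have hD : 0 < 1 + β + α * β := by positivity
  have hDinv : 0 < (1 + β + α * β)⁻¹ := by positivity
  refine ⟨?_, ?_, ?_, ?_⟩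
  · intro a1 a2
    fin_cases a1 <;> fin_cases a2 <;> simp <;> positivity
  · simp [Fin.sum_univ_two]
    field_simp
    ring
  · intro a1 a1'
    fin_cases a1 <;> fin_cases a1' <;> simp [Fin.sum_univ_two, div_eq_mul_inv] <;>
      nlinarith [hDinv, hαA, h1, mul_pos hβpos hDinv]
  · intro a2 a2'
    fin_cases a2 <;> fin_cases a2' <;> simp [Fin.sum_univ_two, div_eq_mul_inv] <;>
      nlinarith [hDinv, hβE, hE, mul_pos (mul_pos hαpos hβpos) hDinv]
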